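/- arXiv:2004.13126 — 5 statements merged into one kernel-verified Lean document; each statement's English description precedes it below -/
import Mathlib

section
/- Let G be a graph on n vertices. In the Maker–Breaker domination game on the Cartesian product G □ K₂ (where Dominator tries to claim a dominating set and Staller tries to claim a closed neighborhood of some vertex), Dominator has a winning strategy (as first or second player) winning in at most n moves. -/
namespace MBD

variable {V : Type*} [DecidableEq V]

/-- `D` dominates every vertex of the target set `T`. -/
def Dominates (G : SimpleGraph V) (D T : Finset V) : Prop :=
  ∀ v ∈ T, v ∈ D ∨ ∃ u ∈ D, G.Adj u v

/-- `DomWins G T k D S t` : in the Maker–Breaker domination game on `G` with target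
set `T`, current Dominator set `D`, Staller set `S`, and `t = true` iff it is
Dominator's turn, Dominator can guarantee that his claimed set dominates `T`
after at most `k` further moves of his own. -/
inductive DomWins (G : SimpleGraph V) (T : Finset V) :
    ℕ → Finset V → Finset V → Bool → Prop
  | won {k : ℕ} {D S : Finset V} {t : Bool} :
      Dominates G D T → DomWins G T k D S t
  | dmove {k : ℕ} {D S : Finset V} (v : V) :
      v ∉ D → v ∉ S → DomWins G T k (insert v D) S false →
      DomWins G T (k + 1) D S true
  | smove {k : ℕ} {D S : Finset V} :
      (∀ v : V, v ∉ D → v ∉ S → DomWins G T k D (insert v S) true) →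
      DomWins G T k D S false

/-- Minimum number of Dominator moves needed to win from the initial position where
Staller already owns `S₀` and `domFirst` tells who moves first. -/
noncomputable def MBNum (G : SimpleGraph V) (T S₀ : Finset V) (domFirst : Bool) : ℕ :=
  sInf {k | DomWins G T k ∅ S₀ domFirst}

/-- The Maker–Breaker domination number (Dominator moves first). -/
noncomputable def gammaMB (G : SimpleGraph V) [Fintype V] : ℕ :=
  MBNum G Finset.univ ∅ true

/-- The Maker–Breaker domination number when Staller moves first. -/
noncomputable def gammaMB' (G : SimpleGraph V) [Fintype V] : ℕ :=
  MBNum G Finset.univ ∅ false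

/-- The domination number of a graph. -/
noncomputable def dominationNumber (G : SimpleGraph V) [Fintype V] : ℕ :=
  sInf {n | ∃ D : Finset V, D.card = n ∧ Dominates G D Finset.univ}

end MBD

private lemma fin2_succ_ne : ∀ i : Fin 2, i + 1 ≠ i := by decide

private lemma dominates_of_fibers {V : Type*} [Fintype V] [DecidableEq V]
    (G : SimpleGraph V) (D : Finset (V × Fin 2))
    (h : ∀ v : V, v ∈ D.image Prod.fst) :
    MBD.Dominates (G.boxProd (⊤ : SimpleGraph (Fin 2))) D Finset.univ := by
  intro p _
  obtain ⟨q, hq, hq1⟩ := Finset.mem_image.mp (h p.1)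
  by_cases he : q = p
  · exact Or.inl (he ▸ hq)
  · refine Or.inr ⟨q, hq, ?_⟩
    rw [SimpleGraph.boxProd_adj]
    right
    refine ⟨?_, hq1⟩
    simp only [SimpleGraph.top_adj]
    intro h2
    exact he (Prod.ext hq1 h2)

private lemma key {V : Type*} [Fintype V] [DecidableEq V] (G : SimpleGraph V) :
    ∀ m : ℕ, ∀ D S : Finset (V × Fin 2),
      (Finset.univ \ D.image Prod.fst).card ≤ m →
      (∀ p ∈ S, p.1 ∈ D.image Prod.fst) →
      MBD.DomWins (G.boxProd (⊤ : SimpleGraph (Fin 2))) Finset.univ m D S true ∧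
      MBD.DomWins (G.boxProd (⊤ : SimpleGraph (Fin 2))) Finset.univ m D S false := by
  intro m
  induction m with
  | zero =>
    intro D S hcard hS
    have hall : ∀ v : V, v ∈ D.image Prod.fst := by
      have hem : (Finset.univ \ D.image Prod.fst) = ∅ :=
        Finset.card_eq_zero.mp (Nat.le_zero.mp hcard)
      intro v
      by_contra hv
      have : v ∈ Finset.univ \ D.image Prod.fst :=
        Finset.mem_sdiff.mpr ⟨Finset.mem_univ v, hv⟩
      rw [hem] at this
      exact absurd this (Finset.notMem_empty v)
    have hwon := dominates_of_fibers G D hall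
    exact ⟨.won hwon, .smove fun v _ _ => .won hwon⟩
  | succ m ih =>
    intro D S hcard hS
    -- Dominator-to-move case, for an arbitrary Staller set satisfying the invariant
    have hA : ∀ S' : Finset (V × Fin 2), (∀ p ∈ S', p.1 ∈ D.image Prod.fst) →
        MBD.DomWins (G.boxProd (⊤ : SimpleGraph (Fin 2))) Finset.univ (m + 1) D S' true := by
      intro S' hS'
      by_cases hmiss : (Finset.univ \ D.image Prod.fst) = ∅
      · refine .won (dominates_of_fibers G D ?_)
        intro v
        by_contra hv
        have : v ∈ Finset.univ \ D.image Prod.fst :=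
          Finset.mem_sdiff.mpr ⟨Finset.mem_univ v, hv⟩
        rw [hmiss] at this
        exact absurd this (Finset.notMem_empty v)
      · obtain ⟨w, hw⟩ := Finset.nonempty_iff_ne_empty.mpr hmiss
        have hwD : w ∉ D.image Prod.fst := (Finset.mem_sdiff.mp hw).2
        have h0D : (w, (0 : Fin 2)) ∉ D := fun h => hwD (Finset.mem_image.mpr ⟨_, h, rfl⟩)
        have h0S : (w, (0 : Fin 2)) ∉ S' := fun h => hwD (hS' _ h)
        refine .dmove (w, (0 : Fin 2)) h0D h0S ?_
        refine (ih (insert (w, 0) D) S' ?_ ?_).2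
        · have himg : (insert ((w, (0 : Fin 2))) D).image Prod.fst
              = insert w (D.image Prod.fst) := Finset.image_insert _ _ _
          have hset : Finset.univ \ insert w (D.image Prod.fst)
              = (Finset.univ \ D.image Prod.fst).erase w := by
            ext x
            simp only [Finset.mem_sdiff, Finset.mem_insert, Finset.mem_erase,
              Finset.mem_univ, true_and]
            tauto
          rw [himg, hset, Finset.card_erase_of_mem hw]
          omega
        · intro p hp
          rw [Finset.image_insert]
          exact Finset.mem_insert_of_mem (hS' p hp)
    refine ⟨hA S hS, .smove ?_⟩
    rintro ⟨w, i⟩ hvD hvS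
    by_cases hv : w ∈ D.image Prod.fst
    · refine hA (insert (w, i) S) ?_
      intro p hp
      rcases Finset.mem_insert.mp hp with h | h
      · rw [h]; exact hv
      · exact hS p h
    · have hpD : (w, i + 1) ∉ D := fun h => hv (Finset.mem_image.mpr ⟨_, h, rfl⟩)
      have hpS : (w, i + 1) ∉ insert (w, i) S := by
        intro h
        rcases Finset.mem_insert.mp h with h | h
        · exact fin2_succ_ne i (congrArg Prod.snd h)
        · exact hv (hS _ h)
      refine .dmove (w, i + 1) hpD hpS ?_
      refine (ih (insert (w, i + 1) D) (insert (w, i) S) ?_ ?_).2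
      · have hw : w ∈ Finset.univ \ D.image Prod.fst :=
          Finset.mem_sdiff.mpr ⟨Finset.mem_univ w, hv⟩
        have himg : (insert ((w, i + 1)) D).image Prod.fst
            = insert w (D.image Prod.fst) := Finset.image_insert _ _ _
        have hset : Finset.univ \ insert w (D.image Prod.fst)
            = (Finset.univ \ D.image Prod.fst).erase w := by
          ext x
          simp only [Finset.mem_sdiff, Finset.mem_insert, Finset.mem_erase,
            Finset.mem_univ, true_and]
          tauto
        rw [himg, hset, Finset.card_erase_of_mem hw]
        omega
      · intro p hp
        rw [Finset.image_insert]
        rcases Finset.mem_insert.mp hp with h | h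
        · rw [h]; exact Finset.mem_insert_self _ _
        · exact Finset.mem_insert_of_mem (hS p h)

/-- For any graph `G` on `n` vertices, Dominator has a winning strategy in the
Maker–Breaker domination game on `G □ K₂` winning in at most `n` moves, both as
first and as second player. -/
theorem stmt0 {V : Type*} [Fintype V] [DecidableEq V] (G : SimpleGraph V) :
    MBD.DomWins (G.boxProd (⊤ : SimpleGraph (Fin 2))) Finset.univ
      (Fintype.card V) ∅ ∅ true ∧
    MBD.DomWins (G.boxProd (⊤ : SimpleGraph (Fin 2))) Finset.univ
      (Fintype.card V) ∅ ∅ false := by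
  have h := key G (Fintype.card V) ∅ ∅
    (by simp [Finset.card_univ]) (by simp)
  exact h
end

section
/- Let G be a graph on n vertices such that Dominator has a winning strategy in the Maker–Breaker domination game on G both as first player and as second player. Then γ'_MB(G □ K₂) ≤ min{2·γ'_MB(G), n}. -/
namespace MBDAux

open MBD Finset

variable {V : Type*} [DecidableEq V]

lemma card_free_insert [Fintype V] {A B : Finset V} {v : V} (hA : v ∉ A) (hB : v ∉ B) :
    (Finset.univ \ (A ∪ B)).card = (Finset.univ \ (insert v (A ∪ B))).card + 1 := by
  have hv : v ∈ Finset.univ \ (A ∪ B) := by simp [hA, hB]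
  have h2 : Finset.univ \ insert v (A ∪ B) = (Finset.univ \ (A ∪ B)).erase v := by
    ext w
    simp only [Finset.mem_sdiff, Finset.mem_erase, Finset.mem_insert, Finset.mem_union,
      Finset.mem_univ, true_and, not_or]
  rw [h2, Finset.card_erase_add_one hv]

/-- The fill lemma: with an even number `2*m` of free vertices and Staller to move,
Dominator weakly wins with `m` moves (board fills at Staller's turn). -/
lemma fill {G : SimpleGraph V} {T : Finset V} [Fintype V] (m : ℕ) :
    ∀ (k : ℕ) (D S : Finset V), (Finset.univ \ (D ∪ S)).card = 2 * m → m ≤ k →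
      DomWins G T k D S false := by
  induction m with
  | zero =>
      intro k D S hcard _
      refine DomWins.smove (fun v hvD hvS => ?_)
      have hv : v ∈ Finset.univ \ (D ∪ S) := by simp [hvD, hvS]
      rw [Finset.card_eq_zero] at hcard
      simp [hcard] at hv
  | succ m ih =>
      intro k D S hcard hk
      refine DomWins.smove (fun v hvD hvS => ?_)
      have e1 := card_free_insert (A := D) (B := S) hvD hvS
      have hpos : 0 < (Finset.univ \ insert v (D ∪ S)).card := by omega
      obtain ⟨w, hw⟩ := Finset.card_pos.mp hpos
      simp only [Finset.mem_sdiff, Finset.mem_insert, Finset.mem_union, not_or] at hw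
      obtain ⟨-, hwv, hwD, hwS⟩ := hw
      obtain ⟨k', rfl⟩ : ∃ k', k = k' + 1 := ⟨k - 1, by omega⟩
      refine DomWins.dmove w hwD (by simp [hwS, hwv]) ?_
      have e2 := card_free_insert (A := D) (B := insert v S) hwD (by simp [hwS, hwv])
      have hu : insert w D ∪ insert v S = insert w (D ∪ insert v S) := by
        rw [Finset.insert_union]
      have hu2 : D ∪ insert v S = insert v (D ∪ S) := by
        rw [Finset.union_insert]
      refine ih k' (insert w D) (insert v S) ?_ (by omega)
      rw [hu, hu2]
      rw [hu2] at e2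
      omega

/-- The "strong" Maker-Breaker domination game: like `DomWins` but Dominator gets no
credit for a full board at Staller's turn; he must actually dominate. -/
inductive Strong (G : SimpleGraph V) (T : Finset V) :
    ℕ → Finset V → Finset V → Bool → Prop
  | won {k : ℕ} {D S : Finset V} {t : Bool} :
      Dominates G D T → Strong G T k D S t
  | dmove {k : ℕ} {D S : Finset V} (v : V) :
      v ∉ D → v ∉ S → Strong G T k (insert v D) S false →
      Strong G T (k + 1) D S true
  | smove {k : ℕ} {D S : Finset V} (w : V) (hwD : w ∉ D) (hwS : w ∉ S) :
      (∀ v : V, v ∉ D → v ∉ S → Strong G T k D (insert v S) true) →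
      Strong G T k D S false

/-- In the strong game, removing Staller vertices and (when it was Staller's turn)
upgrading the turn to Dominator only helps Dominator. -/
lemma strong_mono {G : SimpleGraph V} {T : Finset V} {k : ℕ} {D S : Finset V} {t : Bool}
    (h : Strong G T k D S t) :
    ∀ S' : Finset V, S' ⊆ S → ∀ t' : Bool, (t = false ∨ t' = t) → Strong G T k D S' t' := by
  induction h with
  | won hD => exact fun S' _ t' _ => Strong.won hD
  | dmove v hvD hvS hsub ih =>
      rintro S' hS' t' (ht | rfl)
      · exact absurd ht (by simp)
      · exact Strong.dmove v hvD (fun hv => hvS (hS' hv))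
          (ih S' hS' false (Or.inl rfl))
  | @smove k D S w hwD hwS h ih =>
      intro S' hS' t' _
      have key : ∀ S'' : Finset V, S'' ⊆ S → Strong G T k D S'' true := fun S'' hS'' =>
        ih w hwD hwS S'' (hS''.trans (Finset.subset_insert w S)) true (Or.inr rfl)
      cases t' with
      | true => exact key S' hS'
      | false =>
          refine Strong.smove w hwD (fun hw => hwS (hS' hw)) (fun v hvD hvS' => ?_)
          by_cases hvS : v ∈ S
          · exact key (insert v S') (Finset.insert_subset hvS hS')
          · exact ih v hvD hvS (insert v S') (Finset.insert_subset_insert v hS') true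
              (Or.inr rfl)

/-- With enough free vertices relative to the budget, a weak win is a strong win. -/
lemma weak_to_strong [Fintype V] {G : SimpleGraph V} {T : Finset V} {k : ℕ}
    {D S : Finset V} {t : Bool} (h : DomWins G T k D S t)
    (hc : 2 * k + (bif t then 0 else 1) ≤ (Finset.univ \ (D ∪ S)).card) :
    Strong G T k D S t := by
  induction h with
  | won hD => exact Strong.won hD
  | @dmove k D S v hvD hvS hsub ih =>
      refine Strong.dmove v hvD hvS (ih ?_)
      have e1 := card_free_insert (A := D) (B := S) hvD hvS
      have hu : insert v D ∪ S = insert v (D ∪ S) := by rw [Finset.insert_union]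
      rw [hu]
      simp only [cond_true, cond_false] at hc ⊢
      omega
  | @smove k D S h ih =>
      simp only [cond_false] at hc
      have hpos : 0 < (Finset.univ \ (D ∪ S)).card := by omega
      obtain ⟨w, hw⟩ := Finset.card_pos.mp hpos
      simp only [Finset.mem_sdiff, Finset.mem_union, not_or, Finset.mem_univ, true_and] at hw
      refine Strong.smove w hw.1 hw.2 (fun v hvD hvS => ?_)
      refine ih v hvD hvS ?_
      have e1 := card_free_insert (A := D) (B := S) hvD hvS
      have hu : D ∪ insert v S = insert v (D ∪ S) := by rw [Finset.union_insert]
      rw [hu]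
      simp only [cond_true]
      omega

lemma cardD [Fintype V] {A B : Finset V} {v : V} (hA : v ∉ A) (hB : v ∉ B) :
    (Finset.univ \ (A ∪ B)).card = (Finset.univ \ (insert v A ∪ B)).card + 1 := by
  rw [Finset.insert_union]; exact card_free_insert hA hB

lemma cardS [Fintype V] {A B : Finset V} {v : V} (hA : v ∉ A) (hB : v ∉ B) :
    (Finset.univ \ (A ∪ B)).card = (Finset.univ \ (A ∪ insert v B)).card + 1 := by
  rw [Finset.union_insert]; exact card_free_insert hA hB

/-- The two-copy embedding of a pair of vertex sets into `V × Fin 2`. -/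
def emb (A B : Finset V) : Finset (V × Fin 2) :=
  A.image (fun v => (v, 0)) ∪ B.image (fun v => (v, 1))

lemma mem_emb_zero {A B : Finset V} {v : V} : ((v, (0 : Fin 2)) ∈ emb A B) ↔ v ∈ A := by
  simp [emb, Prod.ext_iff]

lemma mem_emb_one {A B : Finset V} {v : V} : ((v, (1 : Fin 2)) ∈ emb A B) ↔ v ∈ B := by
  simp [emb, Prod.ext_iff]

lemma emb_insert_zero {A B : Finset V} {v : V} :
    emb (insert v A) B = insert (v, (0 : Fin 2)) (emb A B) := by
  simp [emb, Finset.image_insert, Finset.insert_union]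

lemma emb_insert_one {A B : Finset V} {v : V} :
    emb A (insert v B) = insert (v, (1 : Fin 2)) (emb A B) := by
  simp [emb, Finset.image_insert, Finset.union_insert]

lemma emb_empty : emb (∅ : Finset V) ∅ = ∅ := by simp [emb]

lemma fin2_cases (i : Fin 2) : i = 0 ∨ i = 1 := by
  rcases i with ⟨iv, hlt⟩
  interval_cases iv
  · exact Or.inl rfl
  · exact Or.inr rfl

lemma dominates_emb [Fintype V] {G : SimpleGraph V} {A B : Finset V}
    (hA : Dominates G A Finset.univ) (hB : Dominates G B Finset.univ) :
    Dominates (G.boxProd (⊤ : SimpleGraph (Fin 2))) (emb A B) Finset.univ := by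
  rintro ⟨v, i⟩ -
  obtain rfl | rfl := fin2_cases i
  · rcases hA v (Finset.mem_univ v) with h | ⟨u, hu, hadj⟩
    · exact Or.inl (mem_emb_zero.mpr h)
    · exact Or.inr ⟨(u, 0), mem_emb_zero.mpr hu, by
        simp [SimpleGraph.boxProd_adj, hadj]⟩
  · rcases hB v (Finset.mem_univ v) with h | ⟨u, hu, hadj⟩
    · exact Or.inl (mem_emb_one.mpr h)
    · exact Or.inr ⟨(u, 1), mem_emb_one.mpr hu, by
        simp [SimpleGraph.boxProd_adj, hadj]⟩

/-- Combining strong winning strategies on the two copies into a weak winning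
strategy on the prism, with added budget. -/
lemma prodQ [Fintype V] {G : SimpleGraph V} (N : ℕ) :
    ∀ (k₀ k₁ : ℕ) (D₀ S₀ D₁ S₁ : Finset V),
      (Finset.univ \ (D₀ ∪ S₀)).card + (Finset.univ \ (D₁ ∪ S₁)).card ≤ N →
      Strong G Finset.univ k₀ D₀ S₀ false → Strong G Finset.univ k₁ D₁ S₁ false →
      DomWins (G.boxProd (⊤ : SimpleGraph (Fin 2))) Finset.univ (k₀ + k₁)
          (emb D₀ D₁) (emb S₀ S₁) false ∧
      ((Dominates G D₀ Finset.univ ∨ Dominates G D₁ Finset.univ) →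
        DomWins (G.boxProd (⊤ : SimpleGraph (Fin 2))) Finset.univ (k₀ + k₁)
          (emb D₀ D₁) (emb S₀ S₁) true) := by
  induction N using Nat.strong_induction_on with
  | _ N ih =>
  intro k₀ k₁ D₀ S₀ D₁ S₁ hN h₀ h₁
  constructor
  · -- Staller to move in the product game
    refine DomWins.smove (fun p hpD hpS => ?_)
    obtain ⟨v, i⟩ := p
    obtain rfl | rfl := fin2_cases i
    · -- Staller plays in copy 0
      have hv0 : v ∉ D₀ := fun h => hpD (mem_emb_zero.mpr h)
      have hvS0 : v ∉ S₀ := fun h => hpS (mem_emb_zero.mpr h)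
      have e1 := cardS (A := D₀) (B := S₀) hv0 hvS0
      rw [← emb_insert_zero]
      cases h₀ with
      | won hD0 =>
          exact (ih (N - 1) (by omega) k₀ k₁ D₀ (insert v S₀) D₁ S₁ (by omega)
            (Strong.won hD0) h₁).2 (Or.inl hD0)
      | smove w hw1 hw2 hres =>
          cases hres v hv0 hvS0 with
          | won hD0' =>
              exact (ih (N - 1) (by omega) k₀ k₁ D₀ (insert v S₀) D₁ S₁ (by omega)
                (Strong.won hD0') h₁).2 (Or.inl hD0')
          | @dmove m _ _ u hu1 hu2 sub =>
              have e2 := cardD (A := D₀) (B := insert v S₀) hu1 hu2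
              have harr : m + 1 + k₁ = (m + k₁) + 1 := by omega
              rw [harr]
              refine DomWins.dmove (u, 0) (fun h => hu1 (mem_emb_zero.mp h))
                (fun h => hu2 (mem_emb_zero.mp h)) ?_
              rw [← emb_insert_zero]
              exact (ih (N - 1) (by omega) m k₁ (insert u D₀) (insert v S₀) D₁ S₁
                (by omega) sub h₁).1
    · -- Staller plays in copy 1
      have hv1 : v ∉ D₁ := fun h => hpD (mem_emb_one.mpr h)
      have hvS1 : v ∉ S₁ := fun h => hpS (mem_emb_one.mpr h)
      have e1 := cardS (A := D₁) (B := S₁) hv1 hvS1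
      rw [← emb_insert_one]
      cases h₁ with
      | won hD1 =>
          exact (ih (N - 1) (by omega) k₀ k₁ D₀ S₀ D₁ (insert v S₁) (by omega)
            h₀ (Strong.won hD1)).2 (Or.inr hD1)
      | smove w hw1 hw2 hres =>
          cases hres v hv1 hvS1 with
          | won hD1' =>
              exact (ih (N - 1) (by omega) k₀ k₁ D₀ S₀ D₁ (insert v S₁) (by omega)
                h₀ (Strong.won hD1')).2 (Or.inr hD1')
          | @dmove m _ _ u hu1 hu2 sub =>
              have e2 := cardD (A := D₁) (B := insert v S₁) hu1 hu2
              have harr : k₀ + (m + 1) = (k₀ + m) + 1 := by omega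
              rw [harr]
              refine DomWins.dmove (u, 1) (fun h => hu1 (mem_emb_one.mp h))
                (fun h => hu2 (mem_emb_one.mp h)) ?_
              rw [← emb_insert_one]
              exact (ih (N - 1) (by omega) k₀ m D₀ S₀ (insert u D₁) (insert v S₁)
                (by omega) h₀ sub).1
  · -- Dominator to move, one copy already dominated
    rintro (hD0 | hD1)
    · cases strong_mono h₁ S₁ (Finset.Subset.refl S₁) true (Or.inl rfl) with
      | won hD1 => exact DomWins.won (dominates_emb hD0 hD1)
      | @dmove m _ _ u hu1 hu2 sub =>
          have e2 := cardD (A := D₁) (B := S₁) hu1 hu2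
          refine DomWins.dmove (u, 1) (fun h => hu1 (mem_emb_one.mp h))
            (fun h => hu2 (mem_emb_one.mp h)) ?_
          rw [← emb_insert_one]
          exact (ih (N - 1) (by omega) k₀ m D₀ S₀ (insert u D₁) S₁ (by omega) h₀ sub).1
    · cases strong_mono h₀ S₀ (Finset.Subset.refl S₀) true (Or.inl rfl) with
      | won hD0 => exact DomWins.won (dominates_emb hD0 hD1)
      | @dmove m _ _ u hu1 hu2 sub =>
          have e2 := cardD (A := D₀) (B := S₀) hu1 hu2
          have harr : m + 1 + k₁ = (m + k₁) + 1 := by omega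
          rw [harr]
          refine DomWins.dmove (u, 0) (fun h => hu1 (mem_emb_zero.mp h))
            (fun h => hu2 (mem_emb_zero.mp h)) ?_
          rw [← emb_insert_zero]
          exact (ih (N - 1) (by omega) m k₁ (insert u D₀) S₀ D₁ S₁ (by omega) sub h₁).1

end MBDAux

theorem stmt2 {V : Type*} [Fintype V] [DecidableEq V] (G : SimpleGraph V)
    (h1 : ∃ k, MBD.DomWins G Finset.univ k ∅ ∅ true)
    (h2 : ∃ k, MBD.DomWins G Finset.univ k ∅ ∅ false) :
    MBD.gammaMB' (G.boxProd (⊤ : SimpleGraph (Fin 2))) ≤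
      min (2 * MBD.gammaMB' G) (Fintype.card V) := by
  classical
  obtain ⟨kw, hkw⟩ := h2
  have hne : {k | MBD.DomWins G Finset.univ k ∅ ∅ false}.Nonempty := ⟨kw, hkw⟩
  have hmem : MBD.DomWins G Finset.univ (MBD.gammaMB' G) ∅ ∅ false := by
    have := Nat.sInf_mem hne
    exact this
  set k₀ := MBD.gammaMB' G with hk₀def
  -- the ≤ n bound, via the fill lemma
  have hcard : (Finset.univ \ ((∅ : Finset (V × Fin 2)) ∪ ∅)).card = 2 * Fintype.card V := by
    simp [Finset.card_univ, Fintype.card_prod, Fintype.card_fin, mul_comm]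
  have hn : MBD.DomWins (G.boxProd (⊤ : SimpleGraph (Fin 2))) Finset.univ
      (Fintype.card V) ∅ ∅ false :=
    MBDAux.fill (Fintype.card V) (Fintype.card V) ∅ ∅ hcard le_rfl
  have hle_n : MBD.gammaMB' (G.boxProd (⊤ : SimpleGraph (Fin 2))) ≤ Fintype.card V := by
    exact Nat.sInf_le hn
  rcases le_or_gt (Fintype.card V) (2 * k₀) with hbig | hsmall
  · exact le_min (hle_n.trans hbig) hle_n
  · -- 2k₀ < n : the weak strategy is strong, combine two copies
    have hfreeG : (Finset.univ \ ((∅ : Finset V) ∪ ∅)).card = Fintype.card V := by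
      simp [Finset.card_univ]
    have hs : MBDAux.Strong G Finset.univ k₀ ∅ ∅ false := by
      refine MBDAux.weak_to_strong hmem ?_
      rw [hfreeG]
      simp only [cond_false]
      omega
    have hq := (MBDAux.prodQ (Fintype.card V + Fintype.card V) k₀ k₀ ∅ ∅ ∅ ∅
      (by rw [hfreeG]) hs hs).1
    rw [MBDAux.emb_empty] at hq
    have hle2 : MBD.gammaMB' (G.boxProd (⊤ : SimpleGraph (Fin 2))) ≤ k₀ + k₀ := by
      exact Nat.sInf_le hq
    exact le_min (by omega) hle_n
end

section
/- In the Maker–Breaker domination game on the r × l rook's graph K_r □ K_l with r ≤ l, Dominator moving first has a strategy to win in exactly γ = min(r,l) = r moves; that is, γ_MB(K_r □ K_l) = min(r,l). -/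
-- extraction lemma
lemma MBD.extract {V : Type*} [DecidableEq V] [Fintype V] (G : SimpleGraph V) (T : Finset V)
    {k : ℕ} {D S : Finset V} {t : Bool} (h : MBD.DomWins G T k D S t) :
    D.card + S.card + 2*k + (if t then 1 else 2) ≤ Fintype.card V →
    ∃ D' : Finset V, D ⊆ D' ∧ D'.card ≤ D.card + k ∧ MBD.Dominates G D' T := by
  induction h with
  | won hdom => exact fun _ => ⟨_, subset_rfl, Nat.le_add_right _ _, hdom⟩
  | @dmove k D S v hvD hvS h ih =>
    intro hc
    simp at hc
    have hcard : (insert v D).card = D.card + 1 := Finset.card_insert_of_notMem hvD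
    obtain ⟨D', h1, h2, h3⟩ := ih (by simp; rw [hcard]; omega)
    exact ⟨D', (Finset.subset_insert v D).trans h1, by rw [hcard] at h2; omega, h3⟩
  | @smove k D S h ih =>
    intro hc
    simp at hc
    have hlt : (D ∪ S).card < Fintype.card V := by
      have := Finset.card_union_le D S
      omega
    obtain ⟨v, hv⟩ : ∃ v, v ∉ D ∪ S := by
      by_contra hcon
      push_neg at hcon
      have : (Finset.univ : Finset V) ⊆ D ∪ S := fun x _ => hcon x
      have := Finset.card_le_card this
      simp [Finset.card_univ] at this
      omega
    simp only [Finset.mem_union, not_or] at hv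
    obtain ⟨D', h1, h2, h3⟩ := ih v hv.1 hv.2 (by
      simp
      have : (insert v S).card ≤ S.card + 1 := Finset.card_insert_le v S
      omega)
    exact ⟨D', h1, h2, h3⟩

lemma rows_dom (r l : ℕ) (D : Finset (Fin r × Fin l))
    (h : ∀ i : Fin r, i ∈ D.image Prod.fst) :
    MBD.Dominates ((⊤ : SimpleGraph (Fin r)).boxProd ⊤) D Finset.univ := by
  intro v _
  obtain ⟨u, hu, hu1⟩ := Finset.mem_image.mp (h v.1)
  by_cases huv : u = v
  · exact Or.inl (huv ▸ hu)
  · refine Or.inr ⟨u, hu, ?_⟩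
    rw [SimpleGraph.boxProd_adj]
    right
    refine ⟨?_, hu1⟩
    simp only [SimpleGraph.top_adj]
    intro h2
    exact huv (Prod.ext hu1 h2)

lemma dom_strategy (r l : ℕ) :
    ∀ (k : ℕ) (D S : Finset (Fin r × Fin l)),
      ((Finset.univ : Finset (Fin r)) \ D.image Prod.fst).card ≤ k →
      S.card + k ≤ l →
      MBD.DomWins ((⊤ : SimpleGraph (Fin r)).boxProd ⊤) Finset.univ k D S true := by
  intro k
  induction k with
  | zero =>
    intro D S h1 _
    refine MBD.DomWins.won (rows_dom r l D ?_)
    intro i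
    have : ((Finset.univ : Finset (Fin r)) \ D.image Prod.fst) = ∅ :=
      Finset.card_eq_zero.mp (Nat.le_zero.mp h1)
    by_contra hc
    have : i ∈ (Finset.univ : Finset (Fin r)) \ D.image Prod.fst :=
      Finset.mem_sdiff.mpr ⟨Finset.mem_univ i, hc⟩
    simp_all
  | succ k ih =>
    intro D S h1 h2
    by_cases hcov : ((Finset.univ : Finset (Fin r)) \ D.image Prod.fst).card = 0
    · refine MBD.DomWins.won (rows_dom r l D ?_)
      intro i
      have he : ((Finset.univ : Finset (Fin r)) \ D.image Prod.fst) = ∅ :=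
        Finset.card_eq_zero.mp hcov
      by_contra hc
      have : i ∈ (Finset.univ : Finset (Fin r)) \ D.image Prod.fst :=
        Finset.mem_sdiff.mpr ⟨Finset.mem_univ i, hc⟩
      simp_all
    · -- pick an uncovered row i
      obtain ⟨i, hi⟩ := Finset.card_ne_zero.mp hcov
      have hiD : i ∉ D.image Prod.fst := (Finset.mem_sdiff.mp hi).2
      -- pick a column j with (i,j) ∉ S
      have hSl : S.card < l := by omega
      obtain ⟨j, hj⟩ : ∃ j : Fin l, j ∉ S.image Prod.snd := by
        by_contra hcon
        push_neg at hcon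
        have hsub : (Finset.univ : Finset (Fin l)) ⊆ S.image Prod.snd :=
          fun x _ => hcon x
        have := Finset.card_le_card hsub
        have := Finset.card_image_le (s := S) (f := Prod.snd)
        simp [Finset.card_univ] at *
        omega
      have hvD : (i, j) ∉ D := fun h =>
        hiD (Finset.mem_image.mpr ⟨(i, j), h, rfl⟩)
      have hvS : (i, j) ∉ S := fun h =>
        hj (Finset.mem_image.mpr ⟨(i, j), h, rfl⟩)
      refine MBD.DomWins.dmove (i, j) hvD hvS (MBD.DomWins.smove ?_)
      intro w _ _
      refine ih (insert (i, j) D) (insert w S) ?_ ?_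
      · -- uncovered rows decreased
        have hsub : (Finset.univ : Finset (Fin r)) \ (insert (i, j) D).image Prod.fst ⊆
            ((Finset.univ : Finset (Fin r)) \ D.image Prod.fst).erase i := by
          intro x hx
          rw [Finset.mem_sdiff, Finset.image_insert] at hx
          refine Finset.mem_erase.mpr ⟨?_, Finset.mem_sdiff.mpr ⟨hx.1, fun hc => hx.2 (Finset.mem_insert_of_mem hc)⟩⟩
          intro hxi
          exact hx.2 (hxi ▸ Finset.mem_insert_self _ _)
        have h3 := Finset.card_le_card hsub
        have h4 := Finset.card_erase_of_mem hi
        omega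
      · have := Finset.card_insert_le w S
        omega

lemma dom_card_ge (r l : ℕ) (hrl : r ≤ l) (D : Finset (Fin r × Fin l))
    (hD : MBD.Dominates ((⊤ : SimpleGraph (Fin r)).boxProd ⊤) D Finset.univ) :
    r ≤ D.card := by
  by_contra hc
  push_neg at hc
  obtain ⟨i, hi⟩ : ∃ i : Fin r, i ∉ D.image Prod.fst := by
    by_contra hcon
    push_neg at hcon
    have hsub : (Finset.univ : Finset (Fin r)) ⊆ D.image Prod.fst := fun x _ => hcon x
    have := Finset.card_le_card hsub
    have := Finset.card_image_le (s := D) (f := Prod.fst)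
    simp [Finset.card_univ] at *
    omega
  obtain ⟨j, hj⟩ : ∃ j : Fin l, j ∉ D.image Prod.snd := by
    by_contra hcon
    push_neg at hcon
    have hsub : (Finset.univ : Finset (Fin l)) ⊆ D.image Prod.snd := fun x _ => hcon x
    have := Finset.card_le_card hsub
    have := Finset.card_image_le (s := D) (f := Prod.snd)
    simp [Finset.card_univ] at *
    omega
  rcases hD (i, j) (Finset.mem_univ _) with h | ⟨u, hu, hadj⟩
  · exact hi (Finset.mem_image.mpr ⟨(i, j), h, rfl⟩)
  · rw [SimpleGraph.boxProd_adj] at hadj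
    rcases hadj with ⟨_, h2⟩ | ⟨_, h2⟩
    · exact hj (Finset.mem_image.mpr ⟨u, hu, h2⟩)
    · exact hi (Finset.mem_image.mpr ⟨u, hu, h2⟩)



/-- On the rook's graph `K_r □ K_l` with `r ≤ l`, Dominator moving first wins in
exactly `min r l = r` moves. -/
theorem stmt5 (r l : ℕ) (hrl : r ≤ l) :
    MBD.gammaMB ((⊤ : SimpleGraph (Fin r)).boxProd (⊤ : SimpleGraph (Fin l))) =
      min r l := by
  rw [min_eq_left hrl]
  unfold MBD.gammaMB MBD.MBNum
  have hmem : r ∈ {k | MBD.DomWins ((⊤ : SimpleGraph (Fin r)).boxProd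
      (⊤ : SimpleGraph (Fin l))) Finset.univ k ∅ ∅ true} := by
    refine dom_strategy r l r ∅ ∅ ?_ ?_
    · simp
    · simp [hrl]
  refine le_antisymm (Nat.sInf_le hmem) (le_csInf ⟨r, hmem⟩ ?_)
  intro k hk
  by_contra hc
  push_neg at hc
  have hr1 : 1 ≤ r := by omega
  obtain ⟨D', _, hcard, hdom⟩ := MBD.extract _ _ hk (by
    simp only [Finset.card_empty, Fintype.card_prod, Fintype.card_fin, reduceIte]
    have : 2 * k + 1 ≤ r * l := by nlinarith
    omega)
  have := dom_card_ge r l hrl D' hdom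
  simp at hcard
  omega
end

section
/- Let G be a graph with γ(G) = γ_MB(G) = 2, where Dominator moves first. Then γ_MB(G) = γ(G) = 2 if and only if G has a vertex lying in at least two dominating sets of size 2. -/
open MBD Finset

section Helpers
variable {V : Type*} [DecidableEq V]

lemma dominates_mono {G : SimpleGraph V} {D D' T : Finset V} (h : D ⊆ D')
    (hd : Dominates G D T) : Dominates G D' T := by
  intro v hv
  rcases hd v hv with h1 | ⟨u, hu, hadj⟩
  · exact Or.inl (h h1)
  · exact Or.inr ⟨u, h hu, hadj⟩

variable [Fintype V]

lemma notdom_of_gamma_two {G : SimpleGraph V} (hγ : dominationNumber G = 2)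
    {D : Finset V} (hD : D.card ≤ 1) : ¬ Dominates G D Finset.univ := by
  intro hd
  have h1 : dominationNumber G ≤ D.card := Nat.sInf_le ⟨D, rfl, hd⟩
  omega

lemma exists_dom_two {G : SimpleGraph V} (hγ : dominationNumber G = 2) :
    ∃ D : Finset V, D.card = 2 ∧ Dominates G D Finset.univ := by
  unfold dominationNumber at hγ
  have hne : {n | ∃ D : Finset V, D.card = n ∧ Dominates G D Finset.univ}.Nonempty := by
    by_contra h
    rw [Set.not_nonempty_iff_eq_empty] at h
    rw [h, Nat.sInf_empty] at hγ
    omega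
  have h2 := Nat.sInf_mem hne
  rw [hγ] at h2
  exact h2

lemma pair_of_mem {D : Finset V} (h : D.card = 2) {v : V} (hv : v ∈ D) :
    ∃ u, u ≠ v ∧ D = {v, u} := by
  obtain ⟨a, b, hab, rfl⟩ := Finset.card_eq_two.mp h
  rcases Finset.mem_insert.mp hv with rfl | hv'
  · exact ⟨b, fun hb => hab hb.symm, rfl⟩
  · have : v = b := by simpa using hv'
    subst this
    exact ⟨a, fun ha => hab ha, Finset.pair_comm a v⟩

lemma three_case {G : SimpleGraph V} (hγ : dominationNumber G = 2)
    {u v w : V} (huv : u ≠ v) (huw : u ≠ w) (hvw : v ≠ w)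
    (hall : ∀ x : V, x = u ∨ x = v ∨ x = w) :
    ∃ z : V, ∃ D₁ D₂ : Finset V, D₁ ≠ D₂ ∧ D₁.card = 2 ∧ D₂.card = 2 ∧
      Dominates G D₁ Finset.univ ∧ Dominates G D₂ Finset.univ ∧ z ∈ D₁ ∧ z ∈ D₂ := by
  obtain ⟨D, hD2, hDdom⟩ := exists_dom_two hγ
  obtain ⟨p, q, hpq, rfl⟩ := Finset.card_eq_two.mp hD2
  have hr : ∃ r, r ≠ p ∧ r ≠ q ∧ ∀ x : V, x = p ∨ x = q ∨ x = r := by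
    rcases hall p with rfl | rfl | rfl <;> rcases hall q with rfl | rfl | rfl <;>
      first
        | exact absurd rfl hpq
        | exact ⟨u, by aesop, by aesop, fun x => by have := hall x; tauto⟩
        | exact ⟨v, by aesop, by aesop, fun x => by have := hall x; tauto⟩
        | exact ⟨w, by aesop, by aesop, fun x => by have := hall x; tauto⟩
  obtain ⟨r, hrp, hrq, hall3⟩ := hr
  rcases hDdom r (Finset.mem_univ r) with hmem | ⟨s, hs, hadj⟩
  · simp at hmem; tauto
  · have hs' : s = p ∨ s = q := by simpa using hs
    rcases hs' with rfl | rfl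
    · refine ⟨q, {s, q}, {q, r}, ?_, Finset.card_pair hpq, Finset.card_pair (Ne.symm hrq), hDdom,
        ?_, by simp, by simp⟩
      · intro h
        have : r ∈ ({s, q} : Finset V) := h ▸ (by simp)
        simp at this; tauto
      · intro x _
        rcases hall3 x with rfl | rfl | rfl
        · exact Or.inr ⟨r, by simp, hadj.symm⟩
        · exact Or.inl (by simp)
        · exact Or.inl (by simp)
    · refine ⟨p, {p, s}, {p, r}, ?_, Finset.card_pair hpq, Finset.card_pair (Ne.symm hrp), hDdom,
        ?_, by simp, by simp⟩
      · intro h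
        have : r ∈ ({p, s} : Finset V) := h ▸ (by simp)
        simp at this; tauto
      · intro x _
        rcases hall3 x with rfl | rfl | rfl
        · exact Or.inl (by simp)
        · exact Or.inr ⟨r, by simp, hadj.symm⟩
        · exact Or.inl (by simp)

end Helpers

/-- For a graph with domination number 2: Dominator (moving first) can win the
Maker–Breaker domination game in 2 moves iff some vertex lies in at least two
dominating sets of size 2. -/
theorem stmt14 {V : Type*} [Fintype V] [DecidableEq V] (G : SimpleGraph V)
    (hγ : MBD.dominationNumber G = 2) :
    MBD.gammaMB G = 2 ↔
      ∃ v : V, ∃ D₁ D₂ : Finset V, D₁ ≠ D₂ ∧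
        D₁.card = 2 ∧ D₂.card = 2 ∧
        MBD.Dominates G D₁ Finset.univ ∧ MBD.Dominates G D₂ Finset.univ ∧
        v ∈ D₁ ∧ v ∈ D₂ := by
  constructor
  · -- forward
    intro h2
    have hwin : DomWins G Finset.univ 2 ∅ ∅ true := by
      unfold gammaMB MBNum at h2
      have hne : {k | DomWins G Finset.univ k ∅ ∅ true}.Nonempty := by
        by_contra h
        rw [Set.not_nonempty_iff_eq_empty] at h
        rw [h, Nat.sInf_empty] at h2
        omega
      have hm := Nat.sInf_mem hne
      rwa [h2] at hm
    cases hwin with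
    | won hd => exact absurd hd (notdom_of_gamma_two hγ (by simp))
    | dmove v hv1 hv2 h1 =>
      cases h1 with
      | won hd => exact absurd hd (notdom_of_gamma_two hγ (by simp))
      | smove hS =>
        have key : ∀ w : V, w ≠ v → ∃ u, u ≠ v ∧ u ≠ w ∧
            (Dominates G (insert u (insert v ∅)) Finset.univ ∨
              ∀ x : V, x = u ∨ x = v ∨ x = w) := by
          intro w hw
          have h1w := hS w (by simp [hw]) (by simp)
          cases h1w with
          | won hd => exact absurd hd (notdom_of_gamma_two hγ (by simp))
          | dmove u hu1 hu2 h0 =>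
            have huv : u ≠ v := by simpa using hu1
            have huw : u ≠ w := by simpa using hu2
            refine ⟨u, huv, huw, ?_⟩
            cases h0 with
            | won hd => exact Or.inl hd
            | smove hS0 =>
              by_cases hex : ∀ x : V, x = u ∨ x = v ∨ x = w
              · exact Or.inr hex
              · push_neg at hex
                obtain ⟨x, hxu, hxv, hxw⟩ := hex
                have hx := hS0 x (by simp [hxu, hxv]) (by simp [hxw])
                cases hx with
                | won hd => exact Or.inl hd
        obtain ⟨D, hD2, hDdom⟩ := exists_dom_two hγ
        obtain ⟨a, b, hab, rfl⟩ := Finset.card_eq_two.mp hD2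
        have hw0 : ∃ w : V, w ≠ v := by
          by_cases ha : a = v
          · exact ⟨b, fun h => hab (by rw [ha, h])⟩
          · exact ⟨a, ha⟩
        obtain ⟨w₀, hw₀⟩ := hw0
        obtain ⟨u₁, hu₁v, hu₁w, hcase₁⟩ := key w₀ hw₀
        rcases hcase₁ with hdom₁ | h3
        · obtain ⟨u₂, hu₂v, hu₂u₁, hcase₂⟩ := key u₁ hu₁v
          rcases hcase₂ with hdom₂ | h3
          · refine ⟨v, insert u₁ (insert v ∅), insert u₂ (insert v ∅), ?_, ?_, ?_,
              hdom₁, hdom₂, by simp, by simp⟩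
            · intro h
              have : u₁ ∈ (insert u₂ (insert v ∅) : Finset V) := by rw [← h]; simp
              simp at this
              rcases this with h' | h'
              · exact hu₂u₁ h'.symm
              · exact hu₁v h'
            · rw [Finset.card_insert_of_notMem (by simp [hu₁v])]; simp
            · rw [Finset.card_insert_of_notMem (by simp [hu₂v])]; simp
          · exact three_case hγ hu₂v hu₂u₁ (Ne.symm hu₁v) h3
        · exact three_case hγ hu₁v hu₁w (Ne.symm hw₀) h3
  · -- backward
    rintro ⟨v, D₁, D₂, hne, h1, h2, hd1, hd2, hv1, hv2⟩
    obtain ⟨u₁, hu1v, hD1⟩ := pair_of_mem h1 hv1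
    obtain ⟨u₂, hu2v, hD2⟩ := pair_of_mem h2 hv2
    have hu12 : u₁ ≠ u₂ := by
      intro h
      apply hne
      rw [hD1, hD2, h]
    have hwin2 : DomWins G Finset.univ 2 ∅ ∅ true := by
      apply DomWins.dmove v (Finset.notMem_empty v) (Finset.notMem_empty v)
      apply DomWins.smove
      intro w hwv hw0
      have hwv' : w ≠ v := by simpa using hwv
      rcases eq_or_ne u₁ w with rfl | hne1
      · apply DomWins.dmove u₂ (by simp [hu2v]) (by simp [Ne.symm hu12])
        apply DomWins.won
        apply dominates_mono _ hd2
        rw [hD2]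
        intro x hx
        simp at hx ⊢
        tauto
      · apply DomWins.dmove u₁ (by simp [hu1v]) (by simp [hne1])
        apply DomWins.won
        apply dominates_mono _ hd1
        rw [hD1]
        intro x hx
        simp at hx ⊢
        tauto
    have hmem : (2:ℕ) ∈ {k | DomWins G Finset.univ k ∅ ∅ true} := hwin2
    have hle : gammaMB G ≤ 2 := by
      unfold gammaMB MBNum
      exact Nat.sInf_le hmem
    have hge : 2 ≤ gammaMB G := by
      unfold gammaMB MBNum
      apply le_csInf ⟨2, hmem⟩
      intro k hk
      by_contra hlt
      push_neg at hlt
      simp only [Set.mem_setOf_eq] at hk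
      interval_cases k
      · cases hk with
        | won hd => exact absurd hd (notdom_of_gamma_two hγ (by simp))
      · cases hk with
        | won hd => exact absurd hd (notdom_of_gamma_two hγ (by simp))
        | dmove z hz1 hz2 h0 =>
          cases h0 with
          | won hd => exact absurd hd (notdom_of_gamma_two hγ (by simp))
          | smove hS =>
            have hw : ∃ w : V, w ≠ z := by
              by_cases hv' : v = z
              · exact ⟨u₁, by rw [← hv']; exact hu1v⟩
              · exact ⟨v, hv'⟩
            obtain ⟨w, hwz⟩ := hw
            have := hS w (by simp [hwz]) (by simp)
            cases this with
            | won hd => exact absurd hd (notdom_of_gamma_two hγ (by simp))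
    omega
end

section
/- In the Maker–Breaker domination game on the 4-cycle C₄ with Dominator moving first, where one vertex v₂ is pre-claimed by Staller and the antipodal structure is that of ρ₂ (vertices u₁, u₂, v₁, v₂ with edges u₁u₂, v₁v₂, u₁v₁, u₂v₂, Staller owns v₂, and u₁ counts as already dominated), Dominator needs exactly 2 moves to win: he must claim vertices dominating both v₁ and u₂. Moreover, if Dominator skips his first move, Staller can win by claiming v₁ and then isolating v₁ or v₂. -/
open SimpleGraph

instance : DecidableRel (SimpleGraph.pathGraph 2).Adj := fun _ _ =>
  decidable_of_iff _ SimpleGraph.pathGraph_adj.symm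
instance : DecidableRel ((SimpleGraph.pathGraph 2).boxProd (SimpleGraph.pathGraph 2)).Adj :=
  fun _ _ => decidable_of_iff _ (SimpleGraph.boxProd_adj).symm
instance {V} [DecidableEq V] (G : SimpleGraph V) [DecidableRel G.Adj] (D T : Finset V) :
    Decidable (MBD.Dominates G D T) := by unfold MBD.Dominates; infer_instance

/-- If some target vertex has its whole closed neighborhood claimed by Staller,
and the parity of free vertices matches the turn, Dominator cannot win. -/
lemma swon_aux {V : Type*} [DecidableEq V] [Fintype V] {G : SimpleGraph V} {T : Finset V}
    {k : ℕ} {D S : Finset V} {t : Bool} (h : MBD.DomWins G T k D S t) :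
    ∀ v ∈ T, (∀ u, u = v ∨ G.Adj u v → u ∈ S ∧ u ∉ D) →
    (Finset.univ \ (D ∪ S)).card % 2 = (if t then 0 else 1) → False := by
  induction h with
  | @won k D S t hd =>
    intro v hvT hN _
    rcases hd v hvT with h | ⟨u, huD, hadj⟩
    · exact (hN v (Or.inl rfl)).2 h
    · exact (hN u (Or.inr hadj)).2 huD
  | @dmove k D S w hwD hwS hsub ih =>
    intro v hvT hN hpar
    refine ih v hvT (fun u hu => ⟨(hN u hu).1, ?_⟩) ?_
    · simp only [Finset.mem_insert, not_or]
      exact ⟨fun e => hwS (e ▸ (hN u hu).1), (hN u hu).2⟩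
    · have hw : w ∈ Finset.univ \ (D ∪ S) := by simp [hwD, hwS]
      have : Finset.univ \ (insert w D ∪ S) = (Finset.univ \ (D ∪ S)).erase w := by
        ext x; simp [Finset.mem_erase, and_comm, or_comm, not_or, and_assoc]
      rw [this, Finset.card_erase_of_mem hw]
      have h1 : 1 ≤ (Finset.univ \ (D ∪ S)).card := Finset.card_pos.2 ⟨w, hw⟩
      have hpar' : (Finset.univ \ (D ∪ S)).card % 2 = 0 := by simpa using hpar
      have : ((Finset.univ \ (D ∪ S)).card - 1) % 2 = 1 := by omega
      simpa using this
  | @smove k D S hs ih =>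
    intro v hvT hN hpar
    have hpar' : (Finset.univ \ (D ∪ S)).card % 2 = 1 := by simpa using hpar
    have hne : (Finset.univ \ (D ∪ S)).Nonempty := by
      rw [← Finset.card_pos]; omega
    obtain ⟨w, hw⟩ := hne
    have hwD : w ∉ D := fun h => by simp [h] at hw
    have hwS : w ∉ S := fun h => by simp [h] at hw
    refine ih w hwD hwS v hvT (fun u hu => ⟨Finset.mem_insert_of_mem (hN u hu).1, (hN u hu).2⟩) ?_
    have : Finset.univ \ (D ∪ insert w S) = (Finset.univ \ (D ∪ S)).erase w := by
      ext x; simp [Finset.mem_erase, not_or]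
    rw [this, Finset.card_erase_of_mem hw]
    have : ((Finset.univ \ (D ∪ S)).card - 1) % 2 = 0 := by omega
    simpa using this

abbrev G4 := (SimpleGraph.pathGraph 2).boxProd (SimpleGraph.pathGraph 2)
abbrev T4 : Finset (Fin 2 × Fin 2) := Finset.univ \ {((0 : Fin 2), (0 : Fin 2))}

/-- On `ρ₂` (the 4-cycle `u₁u₂v₂v₁` with `v₂` pre-claimed by Staller and `u₁`
already dominated), Dominator moving first needs exactly 2 moves, and if he skips
his first move then Staller wins. -/
theorem stmt18 :
    MBD.MBNum ((SimpleGraph.pathGraph 2).boxProd (SimpleGraph.pathGraph 2))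
      (Finset.univ \ {(((0 : Fin 2), (0 : Fin 2)) : Fin 2 × Fin 2)})
      {(((1 : Fin 2), (1 : Fin 2)) : Fin 2 × Fin 2)} true = 2 ∧
    ¬ ∃ k, MBD.DomWins ((SimpleGraph.pathGraph 2).boxProd (SimpleGraph.pathGraph 2))
      (Finset.univ \ {(((0 : Fin 2), (0 : Fin 2)) : Fin 2 × Fin 2)}) k ∅
      {(((1 : Fin 2), (1 : Fin 2)) : Fin 2 × Fin 2)} false := by
  have nodom1 : ∀ v : Fin 2 × Fin 2, v ≠ ((1:Fin 2),(1:Fin 2)) →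
      ¬ MBD.Dominates G4 {v} T4 := by decide
  have nodom0 : ¬ MBD.Dominates G4 (∅ : Finset (Fin 2 × Fin 2)) T4 := by decide
  constructor
  · -- MBNum = 2
    have h2 : MBD.DomWins G4 T4 2 ∅ {((1:Fin 2),(1:Fin 2))} true := by
      refine MBD.DomWins.dmove ((0:Fin 2),(1:Fin 2)) (by decide) (by decide) ?_
      refine MBD.DomWins.smove (fun w hwD hwS => ?_)
      by_cases hw : w = ((0:Fin 2),(0:Fin 2))
      · refine MBD.DomWins.dmove ((1:Fin 2),(0:Fin 2)) ?_ ?_ (MBD.DomWins.won ?_)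
        · decide
        · subst hw; decide
        · exact (by decide : MBD.Dominates G4 {((1:Fin 2),(0:Fin 2)), ((0:Fin 2),(1:Fin 2))} T4)
      · refine MBD.DomWins.dmove ((0:Fin 2),(0:Fin 2)) ?_ ?_ (MBD.DomWins.won ?_)
        · decide
        · simp only [Finset.mem_insert, Finset.mem_singleton, not_or]
          refine ⟨fun e => hw e.symm, by decide⟩
        · exact (by decide : MBD.Dominates G4 {((0:Fin 2),(0:Fin 2)), ((0:Fin 2),(1:Fin 2))} T4)
    have h1 : ¬ MBD.DomWins G4 T4 1 ∅ {((1:Fin 2),(1:Fin 2))} true := by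
      intro h
      cases h with
      | won hd => exact nodom0 hd
      | dmove v hvD hvS hsub =>
        have hv1 : v ≠ ((1:Fin 2),(1:Fin 2)) := by simpa using hvS
        cases hsub with
        | won hd => exact nodom1 v hv1 (by simpa using hd)
        | smove hs =>
          have key : ∀ w : Fin 2 × Fin 2, w ∉ insert v (∅ : Finset (Fin 2 × Fin 2)) →
              w ∉ ({((1:Fin 2),(1:Fin 2))} : Finset (Fin 2 × Fin 2)) → False := by
            intro w h1 h2
            cases hs w h1 h2 with
            | won hd => exact nodom1 v hv1 (by simpa using hd)
          by_cases hv0 : v = ((0:Fin 2),(0:Fin 2))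
          · exact key ((0:Fin 2),(1:Fin 2)) (by subst hv0; decide) (by decide)
          · exact key ((0:Fin 2),(0:Fin 2))
              (by simp only [Finset.mem_insert]; simpa using fun e => hv0 e.symm) (by decide)
    have h0 : ¬ MBD.DomWins G4 T4 0 ∅ {((1:Fin 2),(1:Fin 2))} true := by
      intro h; cases h with | won hd => exact nodom0 hd
    refine le_antisymm (Nat.sInf_le h2) (le_csInf ⟨2, h2⟩ ?_)
    intro k hk
    by_contra hlt
    push_neg at hlt
    interval_cases k
    · exact h0 hk
    · exact h1 hk
  · -- Staller wins moving first
    rintro ⟨k, h⟩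
    cases h with
    | won hd => exact nodom0 hd
    | smove hs =>
      have h' := hs ((0:Fin 2),(1:Fin 2)) (by decide) (by decide)
      set S' : Finset (Fin 2 × Fin 2) := insert ((0:Fin 2),(1:Fin 2)) {((1:Fin 2),(1:Fin 2))} with hS'
      cases h' with
      | won hd => exact nodom0 hd
      | dmove v hvD hvS hsub =>
        have hv : v = ((0:Fin 2),(0:Fin 2)) ∨ v = ((1:Fin 2),(0:Fin 2)) := by
          have : v ∉ S' := hvS
          rw [hS'] at this; fin_cases v <;> simp_all
        cases hsub with
        | won hd =>
          rcases hv with rfl | rfl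
          · exact nodom1 ((0:Fin 2),(0:Fin 2)) (by decide) (by simpa using hd)
          · exact nodom1 ((1:Fin 2),(0:Fin 2)) (by decide) (by simpa using hd)
        | smove hs2 =>
          rcases hv with rfl | rfl
          · -- v = (0,0); Staller plays (1,0), isolates (1,1)
            have h3 := hs2 ((1:Fin 2),(0:Fin 2)) (by decide) (by rw [hS']; decide)
            refine swon_aux h3 ((1:Fin 2),(1:Fin 2)) (by decide) ?_ ?_
            · rw [hS']; decide
            · rw [hS']; decide
          · -- v = (1,0); Staller plays (0,0), isolates (0,1)
            have h3 := hs2 ((0:Fin 2),(0:Fin 2)) (by decide) (by rw [hS']; decide)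
            refine swon_aux h3 ((0:Fin 2),(1:Fin 2)) (by decide) ?_ ?_
            · rw [hS']; decide
            · rw [hS']; decide
end
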